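/- arXiv:1909.08769 — 4 statements merged into one kernel-verified Lean document; each statement's English description precedes it below -/
import Mathlib

section
/- There do not exist real numbers a, b, c, d with |a|, |b|, |c|, |d| < 1 such that the five points p₁ = (0,0), p₂ = (1,a), p₃ = (1+b, 1+a), p₄ = (2+b, 1+a+c), p₅ = (2+b+d, a+c) satisfy d_∞(p₁, p₄) = d_∞(p₂, p₅), i.e., max{2+b, |1+a+c|} = max{|1+b+d|, |c|}. (Hence the type xyxy′ is not realizable in L∞.) -/
/-- The Chebyshev (L∞) distance on ℝ². -/
noncomputable def dinf (p q : ℝ × ℝ) : ℝ := max |p.1 - q.1| |p.2 - q.2|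

/-- The type xyxy′ is not realizable in L∞: there are no a, b, c, d of absolute
value less than 1 with max{2+b, |1+a+c|} = max{|1+b+d|, |c|}, i.e. such that the
third-order distances d_∞(p₁,p₄) and d_∞(p₂,p₅) agree. -/
theorem xyxy'_not_realizable :
    ¬ ∃ a b c d : ℝ, |a| < 1 ∧ |b| < 1 ∧ |c| < 1 ∧ |d| < 1 ∧
      dinf (0, 0) (2 + b, 1 + a + c) = dinf (1, a) (2 + b + d, a + c) := by
  rintro ⟨a, b, c, d, ha, hb, hc, hd, heq⟩
  rw [abs_lt] at ha hb hc hd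
  unfold dinf at heq
  simp only at heq
  have h1 : |(0:ℝ) - (2 + b)| = 2 + b := by
    rw [abs_of_nonpos (by linarith)]; ring
  have h2 : |(1:ℝ) - (2 + b + d)| < 2 + b := by
    rw [abs_lt]; constructor <;> linarith
  have h3 : |a - (a + c)| < 2 + b := by
    have : a - (a + c) = -c := by ring
    rw [this, abs_lt]; constructor <;> linarith
  have hlt : max |(1:ℝ) - (2 + b + d)| |a - (a + c)| < 2 + b := max_lt h2 h3
  have hle : 2 + b ≤ max |(0:ℝ) - (2 + b)| |(0:ℝ) - (1 + a + c)| :=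
    le_trans h1.ge (le_max_left _ _)
  rw [heq] at hle
  linarith
end

section
/- Let |a|, |b|, |c|, |d| < 1 and suppose the five points p₁ = (0,0), p₂ = (1,a), p₃ = (1+b, 1+a), p₄ = (2+b, 1+a+c), p₅ = (2+b+d, 2+a+c) satisfy d_∞(p₁, p₄) = d_∞(p₂, p₅). Then b = c. -/
/-- For the type xyxy with coordinates (0,0), (1,a), (1+b,1+a), (2+b,1+a+c),
(2+b+d,2+a+c), equality of the two third-order distances forces b = c. -/
theorem xyxy_forces_b_eq_c (a b c d : ℝ)
    (ha : |a| < 1) (hb : |b| < 1) (hc : |c| < 1) (hd : |d| < 1)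
    (h : dinf (0, 0) (2 + b, 1 + a + c) = dinf (1, a) (2 + b + d, 2 + a + c)) :
    b = c := by
  obtain ⟨ha1, ha2⟩ := abs_lt.mp ha
  obtain ⟨hb1, hb2⟩ := abs_lt.mp hb
  obtain ⟨hc1, hc2⟩ := abs_lt.mp hc
  obtain ⟨hd1, hd2⟩ := abs_lt.mp hd
  have k1 : |1 + b + d| < 2 + b := abs_lt.mpr ⟨by linarith, by linarith⟩
  have k2 : |1 + a + c| < 2 + c := abs_lt.mpr ⟨by linarith, by linarith⟩
  have hL : dinf (0, 0) (2 + b, 1 + a + c) = max (2 + b) |1 + a + c| := by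
    simp only [dinf]
    congr 1
    · rw [zero_sub, abs_neg, abs_of_pos (by linarith)]
    · rw [zero_sub, abs_neg]
  have hR : dinf (1, a) (2 + b + d, 2 + a + c) = max |1 + b + d| (2 + c) := by
    simp only [dinf]
    congr 1
    · rw [abs_sub_comm]
      congr 1
      ring
    · rw [abs_sub_comm]
      rw [show (2 : ℝ) + a + c - a = 2 + c by ring, abs_of_pos (by linarith)]
  rw [hL, hR] at h
  have h1 : 2 + b ≤ max |1 + b + d| (2 + c) := h ▸ le_max_left _ _
  have h2 : 2 + c ≤ max (2 + b) |1 + a + c| := h ▸ le_max_right _ _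
  rcases le_max_iff.mp h1 with h1' | h1' <;> rcases le_max_iff.mp h2 with h2' | h2' <;>
    linarith
end

section
/- For any real numbers a, b with |a| < 1, |b| < 1, the seven points (0,0), (1,a), (1+b, 1+a), (2+b, 1+a+b), (2+2b, 2+a+b), (3+2b, 2+a+2b), (3+2b+c, 3+a+2b) contain three collinear points; specifically, the points (1,a), (2+b, 1+a+b), and (3+2b, 2+a+2b) lie on a common line. (Hence the type xyxyxy is not realizable as a line-like crescent configuration in L∞, so line-like crescent configurations of alternating type xyxy… in L∞ have size at most 6.) -/
theorem collinear_insert_smul_vadd_pair {k V P : Type*} [DivisionRing k] [AddCommGroup V]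
    [Module k V] [AddTorsor V P] (s t : k) (v : V) (p : P) :
    Collinear k ({p, s • v +ᵥ p, t • v +ᵥ p} : Set P) := by
  rw [collinear_iff_of_mem (Set.mem_insert p _)]
  refine ⟨v, ?_⟩
  rintro q (rfl | rfl | rfl)
  exacts [⟨0, by simp⟩, ⟨s, rfl⟩, ⟨t, rfl⟩]

theorem xyxyxy_three_collinear_general (a b : ℝ) :
    Collinear ℝ ({((1 : ℝ), a), (2 + b, 1 + a + b), (3 + 2 * b, 2 + a + 2 * b)} :
      Set (ℝ × ℝ)) := by
  have h₁ : ((2 + b, 1 + a + b) : ℝ × ℝ) =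
      (1 + b) • ((1 : ℝ), (1 : ℝ)) +ᵥ ((1 : ℝ), a) := by
    ext <;> simp only [vadd_eq_add, Prod.smul_mk, Prod.fst_add, Prod.snd_add, smul_eq_mul] <;> ring
  have h₂ : ((3 + 2 * b, 2 + a + 2 * b) : ℝ × ℝ) =
      (2 + 2 * b) • ((1 : ℝ), (1 : ℝ)) +ᵥ ((1 : ℝ), a) := by
    ext <;> simp only [vadd_eq_add, Prod.smul_mk, Prod.fst_add, Prod.snd_add, smul_eq_mul] <;> ring
  rw [h₁, h₂]
  exact collinear_insert_smul_vadd_pair _ _ _ _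

/-- For any a, b with |a| < 1, |b| < 1, the points (1,a), (2+b, 1+a+b), and
(3+2b, 2+a+2b) are collinear; hence the type xyxyxy is not realizable as a
line-like crescent configuration in L∞. -/
theorem xyxyxy_three_collinear (a b : ℝ) (ha : |a| < 1) (hb : |b| < 1) :
    Collinear ℝ ({((1 : ℝ), a), (2 + b, 1 + a + b), (3 + 2 * b, 2 + a + 2 * b)} :
      Set (ℝ × ℝ)) :=
  xyxyxy_three_collinear_general a b
end

section
/- The eight points (0,0), (0,6), (1,3), (2,4), (3,2), (4,1), (5,5), (6,7) in ℝ² determine exactly 7 distinct Chebyshev distances, and for each 1 ≤ i ≤ 7 there is a distance occurring with multiplicity exactly i; moreover no three of these points are collinear. -/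
open scoped Classical

lemma not_collinear_of_cross {a b c : ℝ × ℝ}
    (h : (b.1-a.1)*(c.2-a.2) ≠ (b.2-a.2)*(c.1-a.1)) :
    ¬ Collinear ℝ ({a,b,c} : Set (ℝ × ℝ)) := by
  intro hcol
  rw [collinear_iff_of_mem (Set.mem_insert a _)] at hcol
  obtain ⟨v, hv⟩ := hcol
  obtain ⟨tb, hb⟩ := hv b (by simp)
  obtain ⟨tc, hc⟩ := hv c (by simp)
  apply h
  rw [hb, hc]
  simp [Prod.smul_def]
  ring

def Pz : Fin 8 → ℤ × ℤ := ![(0, 0), (0, 6), (1, 3), (2, 4), (3, 2), (4, 1), (5, 5), (6, 7)]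

def Dz (i j : Fin 8) : ℤ := max |(Pz i).1 - (Pz j).1| |(Pz i).2 - (Pz j).2|

def dz : Fin 7 → ℤ := ![7, 1, 6, 2, 5, 4, 3]

/-- The eight points (0,0), (0,6), (1,3), (2,4), (3,2), (4,1), (5,5), (6,7)
determine exactly 7 distinct Chebyshev distances, the i-th occurring with
multiplicity exactly i, and no three of the points are collinear. -/
theorem linfty_crescent_eight :
    let pts : Fin 8 → ℝ × ℝ :=
      ![(0, 0), (0, 6), (1, 3), (2, 4), (3, 2), (4, 1), (5, 5), (6, 7)]
    let pairs : Finset (Fin 8 × Fin 8) := Finset.univ.filter (fun p => p.1 < p.2)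
    (∃ d : Fin 7 → ℝ, Function.Injective d ∧
      (∀ p ∈ pairs, ∃ i : Fin 7, dinf (pts p.1) (pts p.2) = d i) ∧
      (∀ i : Fin 7,
        (pairs.filter (fun p => dinf (pts p.1) (pts p.2) = d i)).card = (i : ℕ) + 1)) ∧
    (∀ i j k : Fin 8, i ≠ j → i ≠ k → j ≠ k →
      ¬ Collinear ℝ ({pts i, pts j, pts k} : Set (ℝ × ℝ))) := by
  intro pts pairs
  have hpts : ∀ i : Fin 8, pts i = (((Pz i).1 : ℝ), ((Pz i).2 : ℝ)) := by
    intro i; fin_cases i <;> norm_num [pts, Pz]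
  have hD : ∀ i j : Fin 8, dinf (pts i) (pts j) = (Dz i j : ℝ) := by
    intro i j
    rw [hpts i, hpts j]
    unfold dinf Dz
    push_cast
    rfl
  constructor
  · refine ⟨fun i => (dz i : ℝ), ?_, ?_, ?_⟩
    · have hinj : Function.Injective dz := by decide
      intro a b hab
      have h2 : ((dz a : ℤ) : ℝ) = ((dz b : ℤ) : ℝ) := hab
      exact hinj (by exact_mod_cast h2)
    · intro p hp
      simp only [pairs, Finset.mem_filter, Finset.mem_univ, true_and] at hp
      rw [hD]
      have : ∃ i : Fin 7, Dz p.1 p.2 = dz i := by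
        revert hp; revert p; decide
      obtain ⟨i, hi⟩ := this
      exact ⟨i, show ((Dz p.1 p.2 : ℤ) : ℝ) = ((dz i : ℤ) : ℝ) by exact_mod_cast hi⟩
    · intro i
      have hcong : pairs.filter (fun p => dinf (pts p.1) (pts p.2) = ((dz i : ℤ) : ℝ))
          = pairs.filter (fun p => Dz p.1 p.2 = dz i) := by
        apply Finset.filter_congr
        intro p _
        rw [hD]
        exact_mod_cast Iff.rfl
      rw [hcong]
      have hcard : ∀ i : Fin 7,
          ((Finset.univ.filter (fun p : Fin 8 × Fin 8 => p.1 < p.2)).filter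
            (fun p => Dz p.1 p.2 = dz i)).card = (i : ℕ) + 1 := by decide
      exact hcard i
  · have key : ∀ i j k : Fin 8, i ≠ j → i ≠ k → j ≠ k →
        ((Pz j).1-(Pz i).1)*((Pz k).2-(Pz i).2) ≠ ((Pz j).2-(Pz i).2)*((Pz k).1-(Pz i).1) := by
      decide
    intro i j k hij hik hjk
    apply not_collinear_of_cross
    have := key i j k hij hik hjk
    rw [hpts i, hpts j, hpts k]
    simp only
    exact_mod_cast this
end
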